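/- Let G be a locally finite simple graph and x a vertex with degree d_x ≥ 1. For every N ∈ (0,∞], K_{G,x}(N) ≤ 2 + (d_x - av₁(x))/2 + #_Δ(x)/d_x - 2d_x/N, where av₁(x) = (1/d_x)Σ_{y~x} d_y and #_Δ(x) is the number of triangles containing x. -/
import Mathlib


open Finset Filter Topology ENNReal SimpleGraph

noncomputable instance (priority := low) finLocFin {V : Type*} [Finite V] (G : SimpleGraph V) :
    G.LocallyFinite := fun _ => Fintype.ofFinite _

/-- Non-normalized graph Laplacian. -/
noncomputable def lap {V : Type*} (G : SimpleGraph V) [G.LocallyFinite] (f : V → ℝ) (x : V) : ℝ :=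
  ∑ y ∈ G.neighborFinset x, (f y - f x)

/-- Bakry–Émery Γ operator. -/
noncomputable def gam {V : Type*} (G : SimpleGraph V) [G.LocallyFinite] (f g : V → ℝ) (x : V) : ℝ :=
  (lap G (fun v => f v * g v) x - f x * lap G g x - g x * lap G f x) / 2

/-- Bakry–Émery Γ₂ operator. -/
noncomputable def gam2 {V : Type*} (G : SimpleGraph V) [G.LocallyFinite] (f g : V → ℝ) (x : V) : ℝ :=
  (lap G (gam G f g) x - gam G f (lap G g) x - gam G (lap G f) g x) / 2

/-- The coefficient 1/N for N ∈ (0,∞], with 1/∞ = 0. -/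
noncomputable def invN (N : ℝ≥0∞) : ℝ := (N⁻¹).toReal

/-- The vertex `x` satisfies the curvature-dimension inequality CD(K,N). -/
def CD {V : Type*} (G : SimpleGraph V) [G.LocallyFinite] (K : ℝ) (N : ℝ≥0∞) (x : V) : Prop :=
  ∀ f : V → ℝ, gam2 G f f x ≥ invN N * (lap G f x) ^ 2 + K * gam G f f x

/-- `gam` as a sum of products of increments. -/
lemma gam_eq_sum {V : Type*} (G : SimpleGraph V) [G.LocallyFinite] (f g : V → ℝ) (v : V) :
    gam G f g v = (∑ y ∈ G.neighborFinset v, (f y - f v) * (g y - g v)) / 2 := by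
  unfold gam lap
  congr 1
  rw [Finset.mul_sum, Finset.mul_sum, ← Finset.sum_sub_distrib, ← Finset.sum_sub_distrib]
  exact Finset.sum_congr rfl fun w _ => by ring

/-- The test function: `-2` at `x`, `-1` on neighbors of `x`, `0` elsewhere. -/
noncomputable def testf {V : Type*} [DecidableEq V] (G : SimpleGraph V) [G.LocallyFinite]
    (x : V) : V → ℝ :=
  fun v => if v = x then -2 else if v ∈ G.neighborFinset x then -1 else 0

lemma testf_self {V : Type*} [DecidableEq V] (G : SimpleGraph V) [G.LocallyFinite] (x : V) :
    testf G x x = -2 := if_pos rfl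

lemma testf_nbr {V : Type*} [DecidableEq V] (G : SimpleGraph V) [G.LocallyFinite] {x y : V}
    (h : y ∈ G.neighborFinset x) : testf G x y = -1 := by
  have hyx : y ≠ x := ne_of_mem_of_not_mem h (G.notMem_neighborFinset_self x)
  simp [testf, hyx, h]

/-- Key pointwise identity: `testf w + 1 = 1 - 2·[w = x] - [w ∈ N(x)]`. -/
lemma testf_add_one {V : Type*} [DecidableEq V] (G : SimpleGraph V) [G.LocallyFinite]
    (x w : V) :
    testf G x w + 1 =
      1 - 2 * (if w = x then (1 : ℝ) else 0) -
        (if w ∈ G.neighborFinset x then (1 : ℝ) else 0) := by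
  by_cases hwx : w = x
  · subst hwx
    simp [testf, G.notMem_neighborFinset_self]
    norm_num
  · by_cases hws : w ∈ G.neighborFinset x <;> simp [testf, hwx, hws]

lemma sum_ind_eq_card {V : Type*} [DecidableEq V] (s t : Finset V) :
    ∑ w ∈ t, (if w ∈ s then (1 : ℝ) else 0) = ((s ∩ t).card : ℝ) := by
  rw [Finset.sum_boole, Finset.filter_mem_eq_inter, Finset.inter_comm]

lemma sum_eq_ind {V : Type*} [DecidableEq V] (t : Finset V) (x : V) (hx : x ∈ t) :
    ∑ w ∈ t, (if w = x then (1 : ℝ) else 0) = 1 := by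
  rw [Finset.sum_ite_eq' t x (fun _ => (1 : ℝ)), if_pos hx]

theorem stmt_9 {V : Type*} (G : SimpleGraph V) [G.LocallyFinite] [DecidableEq V] (x : V)
    (hd : 0 < G.degree x) (N : ℝ≥0∞) (hN : 0 < N) (k : ℝ)
    (hg : IsGreatest {K : ℝ | CD G K N x} k) :
    k ≤ 2 + ((G.degree x : ℝ) -
        (∑ y ∈ G.neighborFinset x, (G.degree y : ℝ)) / (G.degree x : ℝ)) / 2 +
      ((∑ y ∈ G.neighborFinset x,
          ((G.neighborFinset x ∩ G.neighborFinset y).card : ℝ)) / 2) / (G.degree x : ℝ) -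
      2 * (G.degree x : ℝ) * invN N := by
  classical
  set f := testf G x with hf
  set d : ℝ := (G.degree x : ℝ) with hdef
  have hdpos : (0 : ℝ) < d := by rw [hdef]; exact_mod_cast hd
  have hcard : ((G.neighborFinset x).card : ℝ) = d := by
    rw [hdef]; norm_cast
  -- values of f
  have hfx : f x = -2 := testf_self G x
  have hfy : ∀ y ∈ G.neighborFinset x, f y = -1 := fun y hy => testf_nbr G hy
  -- lap f x = d
  have hlapx : lap G f x = d := by
    unfold lap
    rw [Finset.sum_congr rfl (fun y hy => by rw [hfy y hy, hfx]; norm_num : ∀ y ∈ G.neighborFinset x,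
      f y - f x = 1)]
    rw [Finset.sum_const, nsmul_eq_mul, mul_one, hcard]
  -- gam f f x = d / 2
  have hgamx : gam G f f x = d / 2 := by
    rw [gam_eq_sum]
    rw [Finset.sum_congr rfl (fun y hy => by rw [hfy y hy, hfx]; norm_num : ∀ y ∈ G.neighborFinset x,
      (f y - f x) * (f y - f x) = 1)]
    rw [Finset.sum_const, nsmul_eq_mul, mul_one, hcard]
  -- lap f at a neighbor y
  have hlapy : ∀ y ∈ G.neighborFinset x,
      lap G f y = (G.degree y : ℝ) - ((G.neighborFinset x ∩ G.neighborFinset y).card : ℝ) - 2 := by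
    intro y hy
    have hxy : G.Adj x y := by rwa [← SimpleGraph.mem_neighborFinset]
    have hxny : x ∈ G.neighborFinset y := by
      rw [SimpleGraph.mem_neighborFinset]; exact hxy.symm
    unfold lap
    have h1 : ∀ w ∈ G.neighborFinset y, f w - f y =
        1 - 2 * (if w = x then (1 : ℝ) else 0) -
          (if w ∈ G.neighborFinset x then (1 : ℝ) else 0) := by
      intro w _
      rw [hfy y hy, show f w - (-1 : ℝ) = f w + 1 by ring, hf, testf_add_one]
    rw [Finset.sum_congr rfl h1, Finset.sum_sub_distrib, Finset.sum_sub_distrib,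
      Finset.sum_const, ← Finset.mul_sum, sum_eq_ind _ x hxny, sum_ind_eq_card,
      nsmul_eq_mul, mul_one]
    have : ((G.neighborFinset y).card : ℝ) = (G.degree y : ℝ) := by norm_cast
    rw [this]; ring
  -- gam f f at a neighbor y
  have hgamy : ∀ y ∈ G.neighborFinset x,
      gam G f f y =
        ((G.degree y : ℝ) - ((G.neighborFinset x ∩ G.neighborFinset y).card : ℝ)) / 2 := by
    intro y hy
    have hxy : G.Adj x y := by rwa [← SimpleGraph.mem_neighborFinset]
    have hxny : x ∈ G.neighborFinset y := by
      rw [SimpleGraph.mem_neighborFinset]; exact hxy.symm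
    rw [gam_eq_sum]
    have h1 : ∀ w ∈ G.neighborFinset y, (f w - f y) * (f w - f y) =
        1 - (if w ∈ G.neighborFinset x then (1 : ℝ) else 0) := by
      intro w _
      rw [hfy y hy, show f w - (-1 : ℝ) = f w + 1 by ring]
      by_cases hwx : w = x
      · subst hwx
        rw [hfx]
        simp [G.notMem_neighborFinset_self]
        norm_num
      · by_cases hws : w ∈ G.neighborFinset x
        · rw [hfy w hws]; simp [hws]
        · rw [hf]; simp [testf, hwx, hws]
    rw [Finset.sum_congr rfl h1, Finset.sum_sub_distrib, Finset.sum_const, sum_ind_eq_card,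
      nsmul_eq_mul, mul_one]
    have : ((G.neighborFinset y).card : ℝ) = (G.degree y : ℝ) := by norm_cast
    rw [this]
  -- abbreviations for the totals
  set SD : ℝ := ∑ y ∈ G.neighborFinset x, (G.degree y : ℝ) with hSD
  set ST : ℝ := ∑ y ∈ G.neighborFinset x,
    ((G.neighborFinset x ∩ G.neighborFinset y).card : ℝ) with hST
  -- lap (gam f f) x
  have hlapgam : lap G (gam G f f) x = SD / 2 - ST / 2 - d * (d / 2) := by
    unfold lap
    rw [Finset.sum_congr rfl (fun y hy => by rw [hgamy y hy, hgamx])]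
    rw [Finset.sum_sub_distrib, Finset.sum_const, nsmul_eq_mul, hcard, ← Finset.sum_div,
      Finset.sum_sub_distrib, ← hSD, ← hST]
    ring
  -- gam f (lap f) x and gam (lap f) f x
  have hterm : ∀ y ∈ G.neighborFinset x,
      (f y - f x) * (lap G f y - lap G f x) =
        (G.degree y : ℝ) - ((G.neighborFinset x ∩ G.neighborFinset y).card : ℝ) - 2 - d := by
    intro y hy
    rw [hfy y hy, hfx, hlapy y hy, hlapx]; ring
  have hsum2 : ∑ y ∈ G.neighborFinset x, (f y - f x) * (lap G f y - lap G f x)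
      = SD - ST - (2 + d) * d := by
    rw [Finset.sum_congr rfl hterm, Finset.sum_sub_distrib, Finset.sum_sub_distrib,
      Finset.sum_sub_distrib, Finset.sum_const, Finset.sum_const, nsmul_eq_mul, nsmul_eq_mul,
      hcard, ← hSD, ← hST]
    ring
  have hgamlap1 : gam G f (lap G f) x = (SD - ST - (2 + d) * d) / 2 := by
    rw [gam_eq_sum, hsum2]
  have hgamlap2 : gam G (lap G f) f x = (SD - ST - (2 + d) * d) / 2 := by
    rw [gam_eq_sum, ← hsum2]
    congr 1
    exact Finset.sum_congr rfl fun y _ => by ring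
  -- gam2
  have hgam2 : gam2 G f f x = d + d ^ 2 / 4 - SD / 4 + ST / 4 := by
    unfold gam2
    rw [hlapgam, hgamlap1, hgamlap2]
    ring
  -- apply CD
  have hcd := hg.1 f
  rw [hgam2, hlapx, hgamx] at hcd
  -- conclude
  have hR : (2 + (d - SD / d) / 2 + ST / 2 / d - 2 * d * invN N)
      = (2 * d + (d * d - SD) / 2 + ST / 2 - 2 * d * d * invN N) / d := by
    field_simp
  rw [hR, le_div_iff₀ hdpos]
  nlinarith [hcd]
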